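/- Let S and T be restriction semigroups with respect to semilattices E and F respectively, and let θ : S → T be a (∨,r)-premorphism. Regard S and T as inductive categories via the restricted product (a·b = ab if a⁎ = b⁺, undefined otherwise) and the natural partial order. Then θ is an ordered functor between these inductive categories: it maps identities to identities; whenever s·t is defined in S, the product (sθ)·(tθ) is defined in T and equals (s·t)θ; and θ is order-preserving. -/
import Mathlib


universe u v w

/-- Identities of a partial binary operation given by definedness relation `D`
and value function `mul`: idempotents acting as left/right identity whenever
the relevant products are defined. -/
def IsIdOf {C : Type u} (D : C → C → Prop) (mul : C → C → C) (e : C) : Prop :=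
  D e e ∧ mul e e = e ∧ (∀ x, D e x → mul e x = x) ∧ (∀ x, D x e → mul x e = x)

/-- A small category, presented as a set with a partial binary operation:
`D x y` means the product `x·y` is defined, and `mul x y` is its value
(meaningful only when `D x y` holds). -/
structure SmallCat (C : Type u) where
  D : C → C → Prop
  mul : C → C → C
  d : C → C
  r : C → C
  /-- (Ca1): ∃ x·(y·z) ↔ ∃ (x·y)·z -/
  ca1 : ∀ x y z : C, (D y z ∧ D x (mul y z)) ↔ (D x y ∧ D (mul x y) z)
  /-- (Ca1): associativity when defined -/
  ca1_eq : ∀ x y z : C, D x y → D y z → mul x (mul y z) = mul (mul x y) z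
  /-- (Ca2): ∃ x·(y·z) ↔ ∃ x·y and ∃ y·z -/
  ca2 : ∀ x y z : C, (D y z ∧ D x (mul y z)) ↔ (D x y ∧ D y z)
  /-- (Ca3): existence and uniqueness of domain and range identities -/
  d_id : ∀ x, IsIdOf D mul (d x)
  r_id : ∀ x, IsIdOf D mul (r x)
  d_def : ∀ x, D (d x) x
  r_def : ∀ x, D x (r x)
  d_unique : ∀ x e, IsIdOf D mul e → D e x → e = d x
  r_unique : ∀ x e, IsIdOf D mul e → D x e → e = r x
  /-- x·y is defined iff r(x) = d(y) -/
  defined_iff : ∀ x y, D x y ↔ r x = d y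

/-- An ordered category: a small category with a partial order satisfying
(Or1)–(Or3), with corestriction `cores a f = a|f` and restriction
`restr f a = f|a`. -/
structure OrdCat (C : Type u) extends SmallCat C where
  le : C → C → Prop
  le_refl : ∀ a, le a a
  le_trans : ∀ a b c, le a b → le b c → le a c
  le_antisymm : ∀ a b, le a b → le b a → a = b
  or1 : ∀ a b a' b', le a a' → le b b' → D a b → D a' b' → le (mul a b) (mul a' b')
  or2d : ∀ a b, le a b → le (d a) (d b)
  or2r : ∀ a b, le a b → le (r a) (r b)
  cores : C → C → C
  restr : C → C → C
  cores_le : ∀ a f, IsIdOf D mul f → le f (r a) → le (cores a f) a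
  cores_r : ∀ a f, IsIdOf D mul f → le f (r a) → r (cores a f) = f
  cores_unique : ∀ a f, IsIdOf D mul f → le f (r a) →
    ∀ b, le b a → r b = f → b = cores a f
  restr_le : ∀ f a, IsIdOf D mul f → le f (d a) → le (restr f a) a
  restr_d : ∀ f a, IsIdOf D mul f → le f (d a) → d (restr f a) = f
  restr_unique : ∀ f a, IsIdOf D mul f → le f (d a) →
    ∀ b, le b a → d b = f → b = restr f a

/-- An inductive category: an ordered category in which any two identities
have a greatest lower bound among the identities. -/
structure IndCat (C : Type u) extends OrdCat C where
  meet : C → C → C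
  meet_id : ∀ e f, IsIdOf D mul e → IsIdOf D mul f → IsIdOf D mul (meet e f)
  meet_le_left : ∀ e f, IsIdOf D mul e → IsIdOf D mul f → le (meet e f) e
  meet_le_right : ∀ e f, IsIdOf D mul e → IsIdOf D mul f → le (meet e f) f
  meet_glb : ∀ e f g, IsIdOf D mul e → IsIdOf D mul f → IsIdOf D mul g →
    le g e → le g f → le g (meet e f)

/-- The pseudoproduct a⊗b = (a|(r(a)∧d(b))) · ((r(a)∧d(b))|b) of an
inductive category. -/
def IndCat.pp {C : Type u} (K : IndCat C) (a b : C) : C :=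
  K.mul (K.cores a (K.meet (K.r a) (K.d b))) (K.restr (K.meet (K.r a) (K.d b)) b)

/-- An inductive groupoid: an inductive category with inverses. -/
structure IndGrpd (C : Type u) extends IndCat C where
  inv : C → C
  inv_def_right : ∀ x, D x (inv x)
  inv_def_left : ∀ x, D (inv x) x
  mul_inv : ∀ x, mul x (inv x) = d x
  inv_mul : ∀ x, mul (inv x) x = r x

/-- A (two-sided) restriction semigroup with respect to a subsemilattice `E`
of idempotents, with unary operations `plus` (a⁺) and `star` (a⁎). -/
structure RSgrp (S : Type u) where
  mul : S → S → S
  assoc : ∀ a b c : S, mul (mul a b) c = mul a (mul b c)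
  E : Set S
  E_idem : ∀ e ∈ E, mul e e = e
  E_comm : ∀ e ∈ E, ∀ f ∈ E, mul e f = mul f e
  E_mul_mem : ∀ e ∈ E, ∀ f ∈ E, mul e f ∈ E
  plus : S → S
  star : S → S
  plus_mem : ∀ a, plus a ∈ E
  star_mem : ∀ a, star a ∈ E
  /-- a R̃_E a⁺ : for all e ∈ E, ea = a ↔ ea⁺ = a⁺ -/
  plus_spec : ∀ a : S, ∀ e ∈ E, (mul e a = a ↔ mul e (plus a) = plus a)
  /-- a L̃_E a⁎ : for all e ∈ E, ae = a ↔ a⁎e = a⁎ -/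
  star_spec : ∀ a : S, ∀ e ∈ E, (mul a e = a ↔ mul (star a) e = star a)
  /-- R̃_E is a left congruence -/
  rtilde_left_cong : ∀ a b c : S,
    (∀ e ∈ E, mul e a = a ↔ mul e b = b) →
    ∀ e ∈ E, (mul e (mul c a) = mul c a ↔ mul e (mul c b) = mul c b)
  /-- L̃_E is a right congruence -/
  ltilde_right_cong : ∀ a b c : S,
    (∀ e ∈ E, mul a e = a ↔ mul b e = b) →
    ∀ e ∈ E, (mul (mul a c) e = mul a c ↔ mul (mul b c) e = mul b c)
  /-- ae = (ae)⁺a -/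
  ae_eq : ∀ a : S, ∀ e ∈ E, mul a e = mul (plus (mul a e)) a
  /-- ea = a(ea)⁎ -/
  ea_eq : ∀ a : S, ∀ e ∈ E, mul e a = mul a (star (mul e a))

/-- The natural partial order of a restriction semigroup: a ≤ b iff a = a⁺b. -/
def RSgrp.NatLe {S : Type u} (R : RSgrp S) (a b : S) : Prop :=
  a = R.mul (R.plus a) b

/-- `K` is the inductive category induced by the restriction semigroup `R`
via the restricted product and the natural partial order. -/
def InducedIndCat {S : Type u} (R : RSgrp S) (K : IndCat S) : Prop :=
  (∀ a b, K.le a b ↔ R.NatLe a b) ∧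
  (∀ a b, K.D a b ↔ R.star a = R.plus b) ∧
  (∀ a b, K.D a b → K.mul a b = R.mul a b) ∧
  (∀ x, K.d x = R.plus x) ∧
  (∀ x, K.r x = R.star x) ∧
  (∀ e, IsIdOf K.D K.mul e ↔ e ∈ R.E) ∧
  (∀ f a, f ∈ R.E → K.le f (K.d a) → K.restr f a = R.mul f a) ∧
  (∀ a f, f ∈ R.E → K.le f (K.r a) → K.cores a f = R.mul a f) ∧
  (∀ e f, e ∈ R.E → f ∈ R.E → K.meet e f = R.mul e f)

/-- `R` is the restriction semigroup induced by the inductive category `K`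
via the pseudoproduct, with E = identities, a⁺ = d(a), a⁎ = r(a). -/
def InducedRSgrp {C : Type u} (K : IndCat C) (R : RSgrp C) : Prop :=
  R.mul = K.pp ∧ R.E = {e | IsIdOf K.D K.mul e} ∧
  (∀ a, R.plus a = K.d a) ∧ (∀ a, R.star a = K.r a)

/-- An inverse semigroup: every element has a unique inverse. -/
structure InvSgrp (S : Type u) where
  mul : S → S → S
  assoc : ∀ a b c : S, mul (mul a b) c = mul a (mul b c)
  inv : S → S
  inv_spec₁ : ∀ a, mul (mul a (inv a)) a = a
  inv_spec₂ : ∀ a, mul (mul (inv a) a) (inv a) = inv a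
  inv_unique : ∀ a b, mul (mul a b) a = a → mul (mul b a) b = b → b = inv a

/-- The natural partial order of an inverse semigroup: a ≤ b iff a = eb for
some idempotent e. -/
def InvSgrp.le {S : Type u} (Si : InvSgrp S) (a b : S) : Prop :=
  ∃ e, Si.mul e e = e ∧ a = Si.mul e b

/-- a⁺ = aa⁻¹ in an inverse semigroup. -/
def InvSgrp.plus {S : Type u} (Si : InvSgrp S) (a : S) : S := Si.mul a (Si.inv a)

/-- a⁎ = a⁻¹a in an inverse semigroup. -/
def InvSgrp.star {S : Type u} (Si : InvSgrp S) (a : S) : S := Si.mul (Si.inv a) a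

/-- A (∨,r)-premorphism between restriction semigroups:
(∨1) (st)θ ≤ (sθ)(tθ); (∨2) s⁺θ ≤ (sθ)⁺ and s⁎θ ≤ (sθ)⁎. -/
def IsVPre {S : Type u} {T : Type v} (R : RSgrp S) (R' : RSgrp T) (θ : S → T) : Prop :=
  (∀ s t, R'.NatLe (θ (R.mul s t)) (R'.mul (θ s) (θ t))) ∧
  (∀ s, R'.NatLe (θ (R.plus s)) (R'.plus (θ s))) ∧
  (∀ s, R'.NatLe (θ (R.star s)) (R'.star (θ s)))

/-- A (∧,r)-premorphism between restriction semigroups: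
(∧1) (sθ)(tθ) ≤ (st)θ; (∧2) (sθ)⁺ ≤ s⁺θ and (sθ)⁎ ≤ s⁎θ. -/
def IsWPre {S : Type u} {T : Type v} (R : RSgrp S) (R' : RSgrp T) (θ : S → T) : Prop :=
  (∀ s t, R'.NatLe (R'.mul (θ s) (θ t)) (θ (R.mul s t))) ∧
  (∀ s, R'.NatLe (R'.plus (θ s)) (θ (R.plus s))) ∧
  (∀ s, R'.NatLe (R'.star (θ s)) (θ (R.star s)))

/-- An ordered (∧,r)-premorphism: a (∧,r)-premorphism which is also
order-preserving for the natural partial orders. -/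
def IsOrderedWPre {S : Type u} {T : Type v} (R : RSgrp S) (R' : RSgrp T) (θ : S → T) : Prop :=
  IsWPre R R' θ ∧ ∀ s t, R.NatLe s t → R'.NatLe (θ s) (θ t)

/-- A strong (∧,r)-premorphism: a (∧,r)-premorphism satisfying
(∧1)′ (sθ)(tθ) = (sθ)⁺·((st)θ) = ((st)θ)·(tθ)⁎. -/
def IsStrongWPre {S : Type u} {T : Type v} (R : RSgrp S) (R' : RSgrp T) (θ : S → T) : Prop :=
  IsWPre R R' θ ∧
  (∀ s t, R'.mul (θ s) (θ t) = R'.mul (R'.plus (θ s)) (θ (R.mul s t))) ∧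
  (∀ s t, R'.mul (θ s) (θ t) = R'.mul (θ (R.mul s t)) (R'.star (θ t)))

/-- An ordered functor between ordered categories. -/
def IsOrderedFunctor {C : Type u} {D : Type v} (K : OrdCat C) (L : OrdCat D)
    (φ : C → D) : Prop :=
  (∀ x y, K.D x y → L.D (φ x) (φ y)) ∧
  (∀ x y, K.D x y → φ (K.mul x y) = L.mul (φ x) (φ y)) ∧
  (∀ x y, K.le x y → L.le (φ x) (φ y))

/-- (ICP1): if s·t is defined then (sψ)⊗(tψ) ≤ (s·t)ψ. -/
def ICP1 {C : Type u} {D : Type v} (K : IndCat C) (L : IndCat D) (ψ : C → D) : Prop :=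
  ∀ s t, K.D s t → L.le (L.pp (ψ s) (ψ t)) (ψ (K.mul s t))

/-- (ICP2): d(sψ) ≤ d(s)ψ and r(sψ) ≤ r(s)ψ. -/
def ICP2 {C : Type u} {D : Type v} (K : IndCat C) (L : IndCat D) (ψ : C → D) : Prop :=
  (∀ s, L.le (L.d (ψ s)) (ψ (K.d s))) ∧ (∀ s, L.le (L.r (ψ s)) (ψ (K.r s)))

/-- (ICP3): ψ is order-preserving. -/
def ICP3 {C : Type u} {D : Type v} (K : IndCat C) (L : IndCat D) (ψ : C → D) : Prop :=
  ∀ s t, K.le s t → L.le (ψ s) (ψ t)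

/-- (ICP4): (aψ)⊗(fψ) ≤ (a⊗f)ψ and (eψ)⊗(aψ) ≤ (e⊗a)ψ for identities e, f. -/
def ICP4 {C : Type u} {D : Type v} (K : IndCat C) (L : IndCat D) (ψ : C → D) : Prop :=
  (∀ a f, IsIdOf K.D K.mul f → L.le (L.pp (ψ a) (ψ f)) (ψ (K.pp a f))) ∧
  (∀ e a, IsIdOf K.D K.mul e → L.le (L.pp (ψ e) (ψ a)) (ψ (K.pp e a)))

/-- An inductive category prefunctor: (ICP1)–(ICP4). -/
def IsICP {C : Type u} {D : Type v} (K : IndCat C) (L : IndCat D) (ψ : C → D) : Prop :=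
  ICP1 K L ψ ∧ ICP2 K L ψ ∧ ICP3 K L ψ ∧ ICP4 K L ψ

/-- (ICP5): d((sψ)⊗(tψ)) = d(sψ)∧d((s⊗t)ψ) and
r((sψ)⊗(tψ)) = r((s⊗t)ψ)∧r(tψ). -/
def ICP5 {C : Type u} {D : Type v} (K : IndCat C) (L : IndCat D) (ψ : C → D) : Prop :=
  (∀ s t, L.d (L.pp (ψ s) (ψ t)) = L.meet (L.d (ψ s)) (L.d (ψ (K.pp s t)))) ∧
  (∀ s t, L.r (L.pp (ψ s) (ψ t)) = L.meet (L.r (ψ (K.pp s t))) (L.r (ψ t)))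

/-- A strong inductive category prefunctor: (ICP1)–(ICP4) together with (ICP5). -/
def IsStrongICP {C : Type u} {D : Type v} (K : IndCat C) (L : IndCat D) (ψ : C → D) : Prop :=
  IsICP K L ψ ∧ ICP5 K L ψ

/-- An ordered groupoid premorphism between inductive groupoids:
(ICP1), (IGP) (gψ)⁻¹ = g⁻¹ψ, and (ICP3). -/
def IsOGP {C : Type u} {D : Type v} (K : IndGrpd C) (L : IndGrpd D) (ψ : C → D) : Prop :=
  ICP1 K.toIndCat L.toIndCat ψ ∧
  (∀ g, L.inv (ψ g) = ψ (K.inv g)) ∧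
  ICP3 K.toIndCat L.toIndCat ψ

namespace RSgrp

variable {S : Type u} (R : RSgrp S)

theorem plus_mul_self (a : S) : R.mul (R.plus a) a = a :=
  (R.plus_spec a _ (R.plus_mem a)).2 (R.E_idem _ (R.plus_mem a))

theorem mul_star_self (a : S) : R.mul a (R.star a) = a :=
  (R.star_spec a _ (R.star_mem a)).2 (R.E_idem _ (R.star_mem a))

theorem plus_of_mem {e : S} (he : e ∈ R.E) : R.plus e = e := by
  have h1 : R.mul e (R.plus e) = R.plus e := (R.plus_spec e e he).1 (R.E_idem e he)
  calc R.plus e = R.mul e (R.plus e) := h1.symm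
    _ = R.mul (R.plus e) e := R.E_comm e he _ (R.plus_mem e)
    _ = e := R.plus_mul_self e

theorem natLe_of_exists {a b e : S} (he : e ∈ R.E) (hab : a = R.mul e b) :
    R.NatLe a b := by
  have h1 : R.mul e b = R.mul b (R.star (R.mul e b)) := R.ea_eq b e he
  have h2 : R.mul b (R.star (R.mul e b)) =
      R.mul (R.plus (R.mul b (R.star (R.mul e b)))) b := R.ae_eq b _ (R.star_mem _)
  show a = R.mul (R.plus a) b
  calc a = R.mul (R.plus (R.mul b (R.star (R.mul e b)))) b := (hab.trans h1).trans h2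
    _ = R.mul (R.plus a) b := by rw [← (hab.trans h1)]

theorem natLe_refl (a : S) : R.NatLe a a := (R.plus_mul_self a).symm

theorem natLe_trans {a b c : S} (h1 : R.NatLe a b) (h2 : R.NatLe b c) :
    R.NatLe a c := by
  apply R.natLe_of_exists (R.E_mul_mem _ (R.plus_mem a) _ (R.plus_mem b))
  calc a = R.mul (R.plus a) b := h1
    _ = R.mul (R.plus a) (R.mul (R.plus b) c) := by rw [← h2]
    _ = R.mul (R.mul (R.plus a) (R.plus b)) c := (R.assoc _ _ _).symm

theorem natLe_antisymm {a b : S} (hab : R.NatLe a b) (hba : R.NatLe b a) :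
    a = b := by
  have key : ∀ x y : S, x = R.mul (R.plus x) y → y = R.mul (R.plus y) x →
      R.mul (R.plus x) (R.plus y) = R.plus x := by
    intro x y hxy hyx
    have h1 : R.mul (R.mul (R.plus x) (R.plus y)) x = x := by
      conv_rhs => rw [hxy, hyx]
      rw [R.assoc]
    have h2 : R.mul (R.mul (R.plus x) (R.plus y)) (R.plus x) = R.plus x :=
      (R.plus_spec x _ (R.E_mul_mem _ (R.plus_mem x) _ (R.plus_mem y))).1 h1
    calc R.mul (R.plus x) (R.plus y)
        = R.mul (R.mul (R.plus x) (R.plus x)) (R.plus y) := by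
          rw [R.E_idem _ (R.plus_mem x)]
      _ = R.mul (R.plus x) (R.mul (R.plus x) (R.plus y)) := R.assoc _ _ _
      _ = R.mul (R.plus x) (R.mul (R.plus y) (R.plus x)) := by
          rw [R.E_comm _ (R.plus_mem x) _ (R.plus_mem y)]
      _ = R.mul (R.mul (R.plus x) (R.plus y)) (R.plus x) := (R.assoc _ _ _).symm
      _ = R.plus x := h2
  have hpab := key a b hab hba
  have hpba := key b a hba hab
  have hpe : R.plus a = R.plus b := by
    rw [← hpab, R.E_comm _ (R.plus_mem a) _ (R.plus_mem b), hpba]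
  rw [hab, hpe, R.plus_mul_self]

theorem natLe_mul {a b c d : S} (h1 : R.NatLe a b) (h2 : R.NatLe c d) :
    R.NatLe (R.mul a c) (R.mul b d) := by
  apply R.natLe_of_exists
    (R.E_mul_mem _ (R.plus_mem a) _ (R.plus_mem (R.mul b (R.plus c))))
  calc R.mul a c = R.mul (R.mul (R.plus a) b) (R.mul (R.plus c) d) := by
        rw [← h1, ← h2]
    _ = R.mul (R.plus a) (R.mul (R.mul b (R.plus c)) d) := by
        rw [R.assoc, R.assoc]
    _ = R.mul (R.plus a) (R.mul (R.mul (R.plus (R.mul b (R.plus c))) b) d) := by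
        rw [← R.ae_eq b _ (R.plus_mem c)]
    _ = R.mul (R.mul (R.plus a) (R.plus (R.mul b (R.plus c)))) (R.mul b d) := by
        rw [R.assoc _ b d, ← R.assoc]

theorem rtilde_plus_eq {a b : S} (hab : ∀ e ∈ R.E, R.mul e a = a ↔ R.mul e b = b) :
    R.plus a = R.plus b := by
  have h1 : R.mul (R.plus a) b = b := (hab _ (R.plus_mem a)).1 (R.plus_mul_self a)
  have h2 : R.mul (R.plus b) a = a := (hab _ (R.plus_mem b)).2 (R.plus_mul_self b)
  have h3 : R.mul (R.plus a) (R.plus b) = R.plus b :=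
    (R.plus_spec b _ (R.plus_mem a)).1 h1
  have h4 : R.mul (R.plus b) (R.plus a) = R.plus a :=
    (R.plus_spec a _ (R.plus_mem b)).1 h2
  rw [← h4, R.E_comm _ (R.plus_mem b) _ (R.plus_mem a), h3]

theorem plus_mul (a b : S) : R.plus (R.mul a b) = R.plus (R.mul a (R.plus b)) :=
  R.rtilde_plus_eq (R.rtilde_left_cong b (R.plus b) a (fun e he => R.plus_spec b e he))

end RSgrp

section Premorphism

variable {S : Type u} {T : Type v} (R : RSgrp S) (R' : RSgrp T)
  (θ : S → T) (h : IsVPre R R' θ)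

include h

theorem theta_plus_fix {e : S} (he : e ∈ R.E) : θ e = R'.plus (θ e) := by
  have h1 := h.2.1 e
  rw [R.plus_of_mem he] at h1
  unfold RSgrp.NatLe at h1
  rwa [R'.E_idem _ (R'.plus_mem _)] at h1

theorem theta_mem_E {e : S} (he : e ∈ R.E) : θ e ∈ R'.E := by
  rw [theta_plus_fix R R' θ h he]; exact R'.plus_mem _

theorem theta_star (s : S) : θ (R.star s) = R'.star (θ s) := by
  have hE : θ (R.star s) ∈ R'.E := theta_mem_E R R' θ h (R.star_mem s)
  have hmul : R'.mul (θ s) (θ (R.star s)) = θ s := by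
    apply R'.natLe_antisymm
    · have h1 := R'.natLe_mul (R'.natLe_refl (θ s)) (h.2.2 s)
      rwa [R'.mul_star_self] at h1
    · have h1 := h.1 s (R.star s)
      rwa [R.mul_star_self] at h1
  have h3 : R'.mul (R'.star (θ s)) (θ (R.star s)) = R'.star (θ s) :=
    (R'.star_spec (θ s) _ hE).1 hmul
  have h4 : θ (R.star s) = R'.mul (θ (R.star s)) (R'.star (θ s)) := by
    have h5 := h.2.2 s
    unfold RSgrp.NatLe at h5
    rwa [← theta_plus_fix R R' θ h (R.star_mem s)] at h5
  rw [h4, R'.E_comm _ hE _ (R'.star_mem (θ s)), h3]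

theorem theta_plus (s : S) : θ (R.plus s) = R'.plus (θ s) := by
  have hE : θ (R.plus s) ∈ R'.E := theta_mem_E R R' θ h (R.plus_mem s)
  have hmul : R'.mul (θ (R.plus s)) (θ s) = θ s := by
    apply R'.natLe_antisymm
    · have h1 := R'.natLe_mul (h.2.1 s) (R'.natLe_refl (θ s))
      rwa [R'.plus_mul_self] at h1
    · have h1 := h.1 (R.plus s) s
      rwa [R.plus_mul_self] at h1
  have h3 : R'.mul (θ (R.plus s)) (R'.plus (θ s)) = R'.plus (θ s) :=
    (R'.plus_spec (θ s) _ hE).1 hmul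
  have h4 : θ (R.plus s) = R'.mul (θ (R.plus s)) (R'.plus (θ s)) := by
    have h5 := h.2.1 s
    unfold RSgrp.NatLe at h5
    rwa [← theta_plus_fix R R' θ h (R.plus_mem s)] at h5
  rw [h4, h3]

end Premorphism

/-- A (∨,r)-premorphism is an ordered functor for the
restricted products: it maps identities to identities; if s·t is defined
(s⁎ = t⁺) then (sθ)·(tθ) is defined ((sθ)⁎ = (tθ)⁺) and equals (s·t)θ;
and it is order-preserving. -/
theorem stmt_8 {S : Type u} {T : Type v} (R : RSgrp S) (R' : RSgrp T)
    (θ : S → T) (h : IsVPre R R' θ) :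
    (∀ e ∈ R.E, θ e ∈ R'.E) ∧
    (∀ s t, R.star s = R.plus t →
      R'.star (θ s) = R'.plus (θ t) ∧ θ (R.mul s t) = R'.mul (θ s) (θ t)) ∧
    (∀ s t, R.NatLe s t → R'.NatLe (θ s) (θ t)) := by
  refine ⟨fun e he => theta_mem_E R R' θ h he, fun s t hst => ?_, fun s t hst => ?_⟩
  · have hstar : R'.star (θ s) = R'.plus (θ t) := by
      rw [← theta_star R R' θ h s, ← theta_plus R R' θ h t, hst]
    refine ⟨hstar, ?_⟩
    have hplus : R.plus (R.mul s t) = R.plus s := by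
      rw [R.plus_mul s t, ← hst, R.mul_star_self]
    have h1 : θ (R.mul s t) = R'.mul (R'.plus (θ (R.mul s t))) (R'.mul (θ s) (θ t)) :=
      h.1 s t
    rw [← theta_plus R R' θ h (R.mul s t), hplus, theta_plus R R' θ h s,
      ← R'.assoc, R'.plus_mul_self] at h1
    exact h1
  · have h1 : θ s = θ (R.mul (R.plus s) t) := by rw [← hst]
    have h2 := h.1 (R.plus s) t
    rw [← h1] at h2
    refine R'.natLe_trans h2 ?_
    exact R'.natLe_of_exists (theta_mem_E R R' θ h (R.plus_mem s)) rfl
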